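/- arXiv:2510.08563 — 2 statements merged into one kernel-verified Lean document; each statement's English description precedes it below -/
import Mathlib

section
/- Let {x_k} be the RK iterates for the system Ãx ≈ b̃ with arbitrary initial point x_0 ∈ ℝⁿ, let x_* ∈ ℝⁿ, and set z_k = x_k − x_0ⁿ − x_*ʳ. Let σ̃_j > 0 with unit vectors ũ_j ∈ ℝᵐ, ṽ_j ∈ ℝⁿ satisfying Ã ṽ_j = σ̃_j ũ_j and Ãᵀ ũ_j = σ̃_j ṽ_j. Then the conditional expectation of ⟨z_{k+1}, ṽ_j⟩ given x_k satisfies 𝔼_k⟨z_{k+1}, ṽ_j⟩ = (1 − σ̃_j²/‖Ã‖_F²) ⟨z_k, ṽ_j⟩ − σ̃_j ⟨Ã x_* − b̃, ũ_j⟩/‖Ã‖_F². -/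
open Matrix

noncomputable section

namespace RK

/-- The Euclidean inner product on `Fin n → ℝ`. -/
def dot {n : ℕ} (v w : Fin n → ℝ) : ℝ := ∑ i, v i * w i

/-- The squared Euclidean norm on `Fin n → ℝ`. -/
def normSq {n : ℕ} (v : Fin n → ℝ) : ℝ := ∑ i, v i ^ 2

/-- The Euclidean norm on `Fin n → ℝ`. -/
def euclNorm {n : ℕ} (v : Fin n → ℝ) : ℝ := Real.sqrt (normSq v)

/-- The squared Frobenius norm of a matrix. -/
def frobSq {m n : ℕ} (A : Matrix (Fin m) (Fin n) ℝ) : ℝ := ∑ i, ∑ j, A i j ^ 2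

/-- One step of the (randomized) Kaczmarz method for the system `A x ≈ b`, using row `i`:
`x ↦ x - ((aᵢᵀ x - bᵢ) / ‖aᵢ‖²) aᵢ`. -/
def rkStep {m n : ℕ} (A : Matrix (Fin m) (Fin n) ℝ) (b : Fin m → ℝ) (i : Fin m)
    (x : Fin n → ℝ) : Fin n → ℝ :=
  x - ((dot (A i) x - b i) / normSq (A i)) • A i

/-- `rkExp A b x0 k f` is the expectation `𝔼 f(x_k)` of `f` evaluated at the `k`-th iterate of the
randomized Kaczmarz algorithm applied to `A x ≈ b` started at `x0`, where at each step the row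
index `i` is drawn independently at random with probability `‖aᵢ‖² / ‖A‖_F²`. -/
def rkExp {m n : ℕ} (A : Matrix (Fin m) (Fin n) ℝ) (b : Fin m → ℝ) (x0 : Fin n → ℝ) :
    ℕ → ((Fin n → ℝ) → ℝ) → ℝ
  | 0, f => f x0
  | k + 1, f => rkExp A b x0 k fun x => ∑ i, normSq (A i) / frobSq A * f (rkStep A b i x)

/-- The four Penrose conditions: `B` is the Moore–Penrose pseudoinverse of `A`. -/
def IsMoorePenrose {m n : ℕ} (A : Matrix (Fin m) (Fin n) ℝ)
    (B : Matrix (Fin n) (Fin m) ℝ) : Prop :=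
  A * B * A = A ∧ B * A * B = B ∧ (A * B)ᵀ = A * B ∧ (B * A)ᵀ = B * A

/-- The row space `range(Aᵀ)` of a matrix `A`. -/
def rowSpace {m n : ℕ} (A : Matrix (Fin m) (Fin n) ℝ) : Set (Fin n → ℝ) :=
  {v | ∃ u : Fin m → ℝ, v = Aᵀ.mulVec u}

/-- The null space (kernel) of a matrix `A`. -/
def nullSpace {m n : ℕ} (A : Matrix (Fin m) (Fin n) ℝ) : Set (Fin n → ℝ) :=
  {v | A.mulVec v = 0}

/-- `σ` is the smallest nonzero singular value of `A`: `σ > 0`, `σ²` is an eigenvalue of `AᵀA`,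
and `σ²` is less than or equal to every nonzero eigenvalue of `AᵀA`. -/
def IsSmallestNonzeroSingularValue {m n : ℕ} (A : Matrix (Fin m) (Fin n) ℝ) (σ : ℝ) : Prop :=
  0 < σ ∧ (∃ v : Fin n → ℝ, v ≠ 0 ∧ (Aᵀ * A).mulVec v = σ ^ 2 • v) ∧
    ∀ μ : ℝ, μ ≠ 0 → (∃ v : Fin n → ℝ, v ≠ 0 ∧ (Aᵀ * A).mulVec v = μ • v) → σ ^ 2 ≤ μ

lemma dot_sub_left' {n : ℕ} (a b v : Fin n → ℝ) : dot (a - b) v = dot a v - dot b v := by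
  simp [dot, sub_mul, Finset.sum_sub_distrib]

lemma dot_smul_left' {n : ℕ} (c : ℝ) (a v : Fin n → ℝ) : dot (c • a) v = c * dot a v := by
  simp [dot, Finset.mul_sum, mul_assoc]

lemma dot_smul_right' {n : ℕ} (c : ℝ) (a v : Fin n → ℝ) : dot a (c • v) = c * dot a v := by
  simp [dot, Finset.mul_sum, mul_left_comm]

lemma dot_mulVec' {m n : ℕ} (A : Matrix (Fin m) (Fin n) ℝ) (x : Fin n → ℝ) (u : Fin m → ℝ) :
    dot (A.mulVec x) u = dot x (Aᵀ.mulVec u) := by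
  simp only [dot, Matrix.mulVec, dotProduct, Matrix.transpose_apply,
    Finset.sum_mul, Finset.mul_sum]
  rw [Finset.sum_comm]
  apply Finset.sum_congr rfl; intro j _
  apply Finset.sum_congr rfl; intro i _
  ring

lemma normSq_eq_zero' {n : ℕ} (w : Fin n → ℝ) : normSq w = 0 ↔ w = 0 := by
  constructor
  · intro h
    funext i
    have h0 := (Finset.sum_eq_zero_iff_of_nonneg (fun j _ => sq_nonneg (w j))).mp h i
      (Finset.mem_univ i)
    have := pow_eq_zero_iff (n := 2) (by norm_num) |>.mp h0
    simpa using this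
  · intro h; simp [h, normSq]

lemma frobSq_pos' {m n : ℕ} (A : Matrix (Fin m) (Fin n) ℝ) (hA : A ≠ 0) : 0 < frobSq A := by
  have hle : (0:ℝ) ≤ frobSq A :=
    Finset.sum_nonneg fun i _ => Finset.sum_nonneg fun j _ => sq_nonneg _
  rcases hle.lt_or_eq with h | h
  · exact h
  · exfalso; apply hA
    ext i j
    have h1 := (Finset.sum_eq_zero_iff_of_nonneg
      (fun i _ => Finset.sum_nonneg fun j _ => sq_nonneg (A i j))).mp h.symm i (Finset.mem_univ i)
    have h2 := (Finset.sum_eq_zero_iff_of_nonneg (fun j _ => sq_nonneg (A i j))).mp h1 j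
      (Finset.mem_univ j)
    have := pow_eq_zero_iff (n := 2) (by norm_num) |>.mp h2
    simpa using this

/-- **One-step conditional expectation.** With `z_k = x_k − x₀ⁿ − x⋆ʳ` and a singular pair
`(σ̃ⱼ, ũⱼ, ṽⱼ)` of `Ã` with `σ̃ⱼ > 0`, conditioning on the current iterate `x_k`,
`𝔼_k⟨z_{k+1}, ṽⱼ⟩ = (1 − σ̃ⱼ²/‖Ã‖_F²) ⟨z_k, ṽⱼ⟩ − σ̃ⱼ ⟨Ã x⋆ − b̃, ũⱼ⟩ / ‖Ã‖_F²`. -/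
theorem rk_one_step_conditional_expectation {m n : ℕ}
    (At : Matrix (Fin m) (Fin n) ℝ) (bt : Fin m → ℝ)
    (hAt : At ≠ 0) (hrows : ∀ i, At i ≠ 0)
    (σj : ℝ) (hσj : 0 < σj) (u : Fin m → ℝ) (v : Fin n → ℝ)
    (hu : normSq u = 1) (hv : normSq v = 1)
    (hAv : At.mulVec v = σj • u) (hAtu : Atᵀ.mulVec u = σj • v)
    (x0 xstar x0r x0n xsr xsn : Fin n → ℝ)
    (hx0r : x0r ∈ rowSpace At) (hx0n : x0n ∈ nullSpace At) (hx0 : x0 = x0r + x0n)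
    (hxsr : xsr ∈ rowSpace At) (hxsn : xsn ∈ nullSpace At) (hxs : xstar = xsr + xsn)
    (xk : Fin n → ℝ) :
    ∑ i, normSq (At i) / frobSq At * dot (rkStep At bt i xk - x0n - xsr) v =
      (1 - σj ^ 2 / frobSq At) * dot (xk - x0n - xsr) v
        - σj * dot (At.mulVec xstar - bt) u / frobSq At := by

  have hF : frobSq At ≠ 0 := ne_of_gt (frobSq_pos' At hAt)
  have hrow : ∀ i, normSq (At i) ≠ 0 := fun i h => hrows i ((normSq_eq_zero' _).mp h)
  have hFrows : frobSq At = ∑ i, normSq (At i) := by simp [frobSq, normSq]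
  have hAiv : ∀ i, dot (At i) v = σj * u i := by
    intro i
    have := congrFun hAv i
    simpa [Matrix.mulVec, dotProduct, dot] using this
  have hdotmul : ∀ x : Fin n → ℝ, dot (At.mulVec x) u = σj * dot x v := by
    intro x
    rw [dot_mulVec', hAtu, dot_smul_right']
  have h0n : dot x0n v = 0 := by
    have h1 : σj * dot x0n v = 0 := by
      rw [← dot_smul_right', ← hAtu, ← dot_mulVec', hx0n]
      simp [dot]
    rcases mul_eq_zero.mp h1 with h | h
    · exact absurd h (ne_of_gt hσj)
    · exact h
  have hxsn0 : At.mulVec xsn = 0 := hxsn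
  have hstar : dot (At.mulVec xstar - bt) u = σj * dot xsr v - dot bt u := by
    rw [dot_sub_left']
    congr 1
    rw [hxs, Matrix.mulVec_add, hxsn0, add_zero, hdotmul]
  have key : ∀ i : Fin m, normSq (At i) / frobSq At * dot (rkStep At bt i xk - x0n - xsr) v
      = normSq (At i) / frobSq At * dot (xk - x0n - xsr) v
        - σj / frobSq At * ((At.mulVec xk i - bt i) * u i) := by
    intro i
    have h1 : rkStep At bt i xk - x0n - xsr
        = (xk - x0n - xsr) - ((dot (At i) xk - bt i) / normSq (At i)) • At i := by
      funext j; simp [rkStep]; ring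
    have hmv : At.mulVec xk i = dot (At i) xk := by
      simp [Matrix.mulVec, dotProduct, dot]
    have hri := hrow i
    rw [h1, dot_sub_left', dot_smul_left', hAiv i, hmv]
    field_simp
  rw [Finset.sum_congr rfl (fun i _ => key i), Finset.sum_sub_distrib]
  have hs1 : ∑ i, normSq (At i) / frobSq At * dot (xk - x0n - xsr) v
      = dot (xk - x0n - xsr) v := by
    rw [← Finset.sum_mul, ← Finset.sum_div, ← hFrows, div_self hF, one_mul]
  have hs2 : ∑ i, σj / frobSq At * ((At.mulVec xk i - bt i) * u i)
      = σj / frobSq At * (σj * dot xk v - dot bt u) := by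
    rw [← Finset.mul_sum]
    congr 1
    have h3 : ∑ i, (At.mulVec xk i - bt i) * u i = dot (At.mulVec xk - bt) u := by
      simp [dot]
    rw [h3, dot_sub_left', hdotmul]
  have hzk : dot (xk - x0n - xsr) v = dot xk v - dot xsr v := by
    rw [dot_sub_left', dot_sub_left', h0n]; ring
  rw [hs1, hs2, hstar, hzk]
  field_simp
  ring


end RK
end
end

section
/- Fix Ã ∈ ℝ^{m×n} and b̃ ∈ ℝᵐ. Then the constrained minimization of ‖E x_LS − ε‖ over all pairs (A, b) with b ∈ range(A) — where E = Ã − A, ε = b̃ − b, x_LS = A†b — has the same optimal value as the unconstrained least squares problem for the noisy system: min over consistent (A, b) of ‖E x_LS − ε‖ = min over all reparameterizations (V, x_b) with V ∈ ℝ^{n×r}, VᵀV = I_r, r ≤ n, x_b ∈ ℝⁿ of ‖Ã V Vᵀ x_b − b̃‖ = min_{x ∈ ℝⁿ} ‖Ã x − b̃‖. -/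
open Matrix

noncomputable section

namespace RK

/-! The value of each of the three problems at an admissible point is a least squares residual
`‖Ã y - b̃‖`: for `b = A x` the Penrose identity `A A† A = A` gives `A (A† b) = b`, which turns
`(Ã - A) A† b - (b̃ - b)` into `Ã (A† b) - b̃`. Conversely a least squares minimizer `x₀` exists,
since `range Ã` is finite-dimensional, and it is reached by both reparameterizations: by `V = I`,
and by the rank-one matrix `A = u x₀ᵀ` (any `u ≠ 0`), whose pseudoinverse maps `A x₀` back to `x₀`. -/

theorem _root_.LinearMap.exists_forall_norm_apply_sub_le {E F : Type*} [AddCommGroup E]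
    [Module ℝ E] [NormedAddCommGroup F] [NormedSpace ℝ F] [FiniteDimensional ℝ F]
    (L : E →ₗ[ℝ] F) (y : F) : ∃ x, ∀ x', ‖L x - y‖ ≤ ‖L x' - y‖ := by
  obtain ⟨_, ⟨x, rfl⟩, hx⟩ := (LinearMap.range L).closed_of_finiteDimensional
    |>.exists_infDist_eq_dist ⟨0, zero_mem _⟩ y
  refine ⟨x, fun x' => ?_⟩
  rw [← dist_eq_norm, dist_comm, ← hx, ← dist_eq_norm, dist_comm]
  exact Metric.infDist_le_dist_of_mem ⟨x', rfl⟩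

lemma euclNorm_eq_norm_toLp {m : ℕ} (v : Fin m → ℝ) : euclNorm v = ‖WithLp.toLp 2 v‖ := by
  simp [EuclideanSpace.norm_eq, euclNorm, normSq]

theorem exists_forall_euclNorm_mulVec_sub_le {m n : ℕ} (A : Matrix (Fin m) (Fin n) ℝ)
    (b : Fin m → ℝ) : ∃ x₀, ∀ x, euclNorm (A *ᵥ x₀ - b) ≤ euclNorm (A *ᵥ x - b) := by
  simpa [euclNorm_eq_norm_toLp] using LinearMap.exists_forall_norm_apply_sub_le
    ((WithLp.linearEquiv 2 ℝ (Fin m → ℝ)).symm.toLinearMap ∘ₗ A.mulVecLin) (WithLp.toLp 2 b)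

section RankOne

variable {k l : Type*} [Fintype k] [Fintype l]

/-- The pseudoinverse `v uᵀ / (‖u‖² ‖v‖²)` of `u vᵀ`; when `u = 0` or `v = 0` the junk value
`0⁻¹ = 0` makes it the zero matrix, which is again the right answer. -/
def rankOnePinv (u : k → ℝ) (v : l → ℝ) : Matrix l k ℝ :=
  (u ⬝ᵥ u * (v ⬝ᵥ v))⁻¹ • vecMulVec v u

lemma inv_mul_self_smul_vecMulVec (u : k → ℝ) (v : l → ℝ) :
    ((u ⬝ᵥ u * (v ⬝ᵥ v))⁻¹ * (u ⬝ᵥ u * (v ⬝ᵥ v))) • vecMulVec u v = vecMulVec u v := by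
  by_cases h : u ⬝ᵥ u * (v ⬝ᵥ v) = 0
  · rcases mul_eq_zero.1 h with h | h <;> ext <;> simp [dotProduct_self_eq_zero.1 h, vecMulVec_apply]
  · rw [inv_mul_cancel₀ h, one_smul]

theorem isMoorePenrose_vecMulVec {m n : ℕ} (u : Fin m → ℝ) (v : Fin n → ℝ) :
    IsMoorePenrose (vecMulVec u v) (rankOnePinv u v) := by
  have huv := inv_mul_self_smul_vecMulVec u v
  have hvu := inv_mul_self_smul_vecMulVec v u
  rw [mul_comm (v ⬝ᵥ v)] at hvu
  simp only [IsMoorePenrose, rankOnePinv, Matrix.mul_smul, Matrix.smul_mul,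
    vecMulVec_mul_vecMulVec, vecMulVec_smul, smul_smul, transpose_smul, transpose_vecMulVec]
  refine ⟨?_, ?_, trivial, trivial⟩
  · convert huv using 2
    ring
  · conv_rhs => rw [← hvu, smul_smul]
    ring_nf

theorem rankOnePinv_mulVec_vecMulVec_mulVec {u : k → ℝ} (hu : u ≠ 0) (v : l → ℝ) :
    rankOnePinv u v *ᵥ (vecMulVec u v *ᵥ v) = v := by
  by_cases hv : v = 0
  · simp [hv]
  have hu' : u ⬝ᵥ u ≠ 0 := by simpa using hu
  have hv' : v ⬝ᵥ v ≠ 0 := by simpa using hv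
  rw [mulVec_mulVec, rankOnePinv, Matrix.smul_mul, vecMulVec_mul_vecMulVec, vecMulVec_smul,
    smul_mulVec, smul_mulVec, vecMulVec_mulVec, op_smul_eq_smul, smul_smul, smul_smul]
  convert one_smul ℝ v
  field_simp

end RankOne

section Residual

variable {R k l : Type*} [Ring R] [Fintype l]

lemma sub_mulVec_sub_sub_eq (At A : Matrix k l R) (bt b : k → R) {y : l → R}
    (h : A *ᵥ y = b) : (At - A) *ᵥ y - (bt - b) = At *ᵥ y - bt := by
  rw [sub_mulVec, h]
  abel

lemma mul_mulVec_eq_of_mul_mul_eq [Fintype k] {A : Matrix k l R} {B : Matrix l k R}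
    (hABA : A * B * A = A) {b : k → R} (hb : ∃ x, A *ᵥ x = b) : A *ᵥ (B *ᵥ b) = b := by
  obtain ⟨x, rfl⟩ := hb
  rw [mulVec_mulVec, mulVec_mulVec, hABA]

end Residual

theorem exists_consistent_residual_eq {m n : ℕ} (At : Matrix (Fin m) (Fin n) ℝ) (bt : Fin m → ℝ)
    (x : Fin n → ℝ) : ∃ (A : Matrix (Fin m) (Fin n) ℝ) (b : Fin m → ℝ)
      (Ap : Matrix (Fin n) (Fin m) ℝ), IsMoorePenrose A Ap ∧ (∃ x, A *ᵥ x = b) ∧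
      euclNorm ((At - A) *ᵥ (Ap *ᵥ b) - (bt - b)) = euclNorm (At *ᵥ x - bt) := by
  rcases Nat.eq_zero_or_pos m with rfl | hm
  · exact ⟨0, 0, 0, by simp [IsMoorePenrose], ⟨0, by simp⟩, congrArg _ (Subsingleton.elim _ _)⟩
  obtain ⟨u, hu⟩ : ∃ u : Fin m → ℝ, u ≠ 0 := ⟨Pi.single ⟨0, hm⟩ 1, by simp⟩
  refine ⟨vecMulVec u x, vecMulVec u x *ᵥ x, rankOnePinv u x, isMoorePenrose_vecMulVec u x,
    ⟨x, rfl⟩, ?_⟩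
  rw [rankOnePinv_mulVec_vecMulVec_mulVec hu, sub_mulVec_sub_sub_eq _ _ _ _ rfl]

/-- **Equalities (4.6)–(4.8).** The constrained minimization of `‖E x_LS − ε‖` over consistent
pairs `(A, b)` (with `E = Ã − A`, `ε = b̃ − b`, `x_LS = A†b`), its reparameterization over pairs
`(V, x_b)` with `V ∈ ℝ^{n×r}`, `VᵀV = I_r`, `r ≤ n`, and the unconstrained least squares problem
`min_x ‖Ã x − b̃‖` all have the same (attained) optimal value. -/
theorem reparameterization_equal_minima {m n : ℕ}
    (At : Matrix (Fin m) (Fin n) ℝ) (bt : Fin m → ℝ) :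
    ∃ c : ℝ,
      IsLeast {c' : ℝ | ∃ (A : Matrix (Fin m) (Fin n) ℝ) (b : Fin m → ℝ)
          (Ap : Matrix (Fin n) (Fin m) ℝ), IsMoorePenrose A Ap ∧ (∃ x, A.mulVec x = b) ∧
          c' = euclNorm ((At - A).mulVec (Ap.mulVec b) - (bt - b))} c ∧
      IsLeast {c' : ℝ | ∃ r : ℕ, r ≤ n ∧ ∃ V : Matrix (Fin n) (Fin r) ℝ,
          Vᵀ * V = 1 ∧ ∃ xb : Fin n → ℝ,
          c' = euclNorm (At.mulVec ((V * Vᵀ).mulVec xb) - bt)} c ∧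
      IsLeast {c' : ℝ | ∃ x : Fin n → ℝ, c' = euclNorm (At.mulVec x - bt)} c := by
  obtain ⟨x₀, hx₀⟩ := exists_forall_euclNorm_mulVec_sub_le At bt
  obtain ⟨A₀, b₀, Ap₀, hMP₀, hb₀, hres₀⟩ := exists_consistent_residual_eq At bt x₀
  refine ⟨euclNorm (At *ᵥ x₀ - bt), ⟨⟨A₀, b₀, Ap₀, hMP₀, hb₀, hres₀.symm⟩, ?_⟩,
    ⟨⟨n, le_rfl, 1, by simp, x₀, by simp⟩, ?_⟩, ⟨⟨x₀, rfl⟩, ?_⟩⟩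
  · rintro _ ⟨A, b, Ap, hMP, hb, rfl⟩
    rw [sub_mulVec_sub_sub_eq _ _ _ _ (mul_mulVec_eq_of_mul_mul_eq hMP.1 hb)]
    exact hx₀ _
  · rintro _ ⟨r, -, V, -, xb, rfl⟩
    exact hx₀ _
  · rintro _ ⟨x, rfl⟩
    exact hx₀ x

end RK
end
end
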